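/- Let τ > 0, let n ≥ 1, and let x_1, …, x_n be real numbers not all zero (so that x̄² = (1/n)∑ x_j² > 0). Define f(μ) = −n·log μ − (1/(2τ²))·∑_{j=1}^n (x_j/μ − 1)² for μ > 0, and let μ̂_τ = (√((x̄)² + 4τ²·x̄²) − x̄)/(2τ²) with x̄ = (1/n)∑ x_j. Then f attains its global maximum over (0, ∞) at μ̂_τ, and μ̂_τ is the unique maximizer: f(μ) < f(μ̂_τ) for every μ > 0 with μ ≠ μ̂_τ. -/

import Mathlib

/-!
In the variable `t = 1/μ` the function is `n log t` minus a quadratic in `t` with leading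
coefficient `S₂/(2τ²) > 0`, where `S₂ = ∑ x_j²`. At a stationary point `t₀`, the tangent bound
`log s ≤ s - 1` for `s = t/t₀` gives `f(μ) ≤ f(μ₀) - S₂/(2τ²) (1/μ - 1/μ₀)²` with `μ₀ = 1/t₀`.
Stationarity reads `τ²μ₀² + x̄ μ₀ = x̄²`, and `μ̂_τ` is the positive root of this quadratic.
-/

open Real Finset

lemma sum_div_sub_one_sq {ι : Type*} (s : Finset ι) (x : ι → ℝ) (μ : ℝ) :
    ∑ j ∈ s, (x j / μ - 1) ^ 2 = μ⁻¹ ^ 2 * ∑ j ∈ s, x j ^ 2 - 2 * μ⁻¹ * ∑ j ∈ s, x j + #s := by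
  simp only [sub_sq, div_eq_mul_inv, sum_add_distrib, sum_sub_distrib, mul_sum, sum_const,
    nsmul_eq_mul]
  congr 1; congr 1 <;> refine sum_congr rfl fun j _ => by ring
  simp

lemma quadratic_pos_root_eq {a b c : ℝ} (ha : 0 < a) (hc : 0 ≤ c) :
    a * ((√(b ^ 2 + 4 * a * c) - b) / (2 * a)) ^ 2 + b * ((√(b ^ 2 + 4 * a * c) - b) / (2 * a))
      = c := by
  set d := b ^ 2 + 4 * a * c with hd_def
  have hd : √d ^ 2 = d := sq_sqrt (by positivity)
  field_simp
  linear_combination hd + hd_def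

lemma quadratic_pos_root_pos {a b c : ℝ} (ha : 0 < a) (hc : 0 < c) :
    0 < (√(b ^ 2 + 4 * a * c) - b) / (2 * a) := by
  have : b < √(b ^ 2 + 4 * a * c) := lt_sqrt_of_sq_lt (by nlinarith [mul_pos ha hc])
  exact div_pos (by linarith) (by positivity)

lemma neg_log_sub_quadratic_inv_le_sub_sq {N a b μ μ₀ : ℝ} (hN : 0 ≤ N) (hμ : 0 < μ)
    (hμ₀ : 0 < μ₀) (hstat : N * μ₀ ^ 2 = 2 * (a - b * μ₀)) :
    -N * log μ - (a * μ⁻¹ ^ 2 - 2 * b * μ⁻¹)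
      ≤ -N * log μ₀ - (a * μ₀⁻¹ ^ 2 - 2 * b * μ₀⁻¹) - a * (μ⁻¹ - μ₀⁻¹) ^ 2 := by
  have hlog : log μ₀ - log μ ≤ μ₀ / μ - 1 := by
    rw [← log_div hμ₀.ne' hμ.ne']
    exact log_le_sub_one_of_pos (by positivity)
  have hlin : N * (μ₀ / μ - 1) = 2 * (a * μ₀⁻¹ - b) * (μ⁻¹ - μ₀⁻¹) := by
    field_simp
    linear_combination (μ₀ - μ) * hstat
  linear_combination mul_le_mul_of_nonneg_left hlog hN + hlin

theorem cmle_is_unique_maximizer_general (τ : ℝ) (hτ : 0 < τ) (n : ℕ)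
    (x : Fin n → ℝ) (hx : ∃ j, x j ≠ 0) :
    IsMaxOn (fun μ : ℝ => -(n : ℝ) * Real.log μ
        - (1 / (2 * τ ^ 2)) * ∑ j, (x j / μ - 1) ^ 2) (Set.Ioi 0)
      ((Real.sqrt (((1 : ℝ) / n * ∑ j, x j) ^ 2
          + 4 * τ ^ 2 * ((1 : ℝ) / n * ∑ j, (x j) ^ 2))
        - (1 : ℝ) / n * ∑ j, x j) / (2 * τ ^ 2)) ∧
    ∀ μ : ℝ, 0 < μ →
      μ ≠ (Real.sqrt (((1 : ℝ) / n * ∑ j, x j) ^ 2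
          + 4 * τ ^ 2 * ((1 : ℝ) / n * ∑ j, (x j) ^ 2))
        - (1 : ℝ) / n * ∑ j, x j) / (2 * τ ^ 2) →
      (fun μ : ℝ => -(n : ℝ) * Real.log μ
          - (1 / (2 * τ ^ 2)) * ∑ j, (x j / μ - 1) ^ 2) μ
        < (fun μ : ℝ => -(n : ℝ) * Real.log μ
            - (1 / (2 * τ ^ 2)) * ∑ j, (x j / μ - 1) ^ 2)
          ((Real.sqrt (((1 : ℝ) / n * ∑ j, x j) ^ 2
              + 4 * τ ^ 2 * ((1 : ℝ) / n * ∑ j, (x j) ^ 2))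
            - (1 : ℝ) / n * ∑ j, x j) / (2 * τ ^ 2)) := by
  obtain ⟨j₀, hj₀⟩ := hx
  have hn : (0 : ℝ) < n := by exact_mod_cast j₀.pos
  set S₁ := ∑ j, x j
  set S₂ := ∑ j, x j ^ 2
  have hS₂ : 0 < S₂ := sum_pos' (fun j _ => sq_nonneg (x j)) ⟨j₀, mem_univ _, by positivity⟩
  have hm₂ : 0 < 1 / n * S₂ := by positivity
  have hμ₀ := quadratic_pos_root_pos (b := 1 / n * S₁) (pow_pos hτ 2) hm₂
  have hroot := quadratic_pos_root_eq (b := 1 / n * S₁) (pow_pos hτ 2) hm₂.le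
  set μ₀ := (√((1 / n * S₁) ^ 2 + 4 * τ ^ 2 * (1 / n * S₂)) - 1 / n * S₁) / (2 * τ ^ 2)
  clear_value μ₀
  have hstat : n * μ₀ ^ 2 = 2 * (S₂ / (2 * τ ^ 2) - S₁ / (2 * τ ^ 2) * μ₀) := by
    field_simp at hroot ⊢
    linear_combination hroot
  have hbound : ∀ μ > 0, -n * log μ - 1 / (2 * τ ^ 2) * ∑ j, (x j / μ - 1) ^ 2
      ≤ -n * log μ₀ - 1 / (2 * τ ^ 2) * ∑ j, (x j / μ₀ - 1) ^ 2
        - S₂ / (2 * τ ^ 2) * (μ⁻¹ - μ₀⁻¹) ^ 2 := by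
    intro μ hμ
    have key := neg_log_sub_quadratic_inv_le_sub_sq hn.le hμ hμ₀ hstat
    simp only [sum_div_sub_one_sq, card_univ, Fintype.card_fin]
    linear_combination key
  refine ⟨isMaxOn_iff.2 fun μ hμ => ?_, fun μ hμ hne => ?_⟩
  · have hgap : 0 ≤ S₂ / (2 * τ ^ 2) * (μ⁻¹ - μ₀⁻¹) ^ 2 := by positivity
    linarith [hbound μ hμ]
  · have hgap : 0 < S₂ / (2 * τ ^ 2) * (μ⁻¹ - μ₀⁻¹) ^ 2 :=
      mul_pos (by positivity) (sq_pos_of_ne_zero (sub_ne_zero.2 (inv_injective.ne hne)))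
    linarith [hbound μ hμ]

/-- `f(μ) = −n·log μ − (1/(2τ²))·∑ (x_j/μ − 1)²` attains its global maximum
over `(0, ∞)` at the constrained MLE `μ̂_τ`, which is the unique maximizer. -/
theorem cmle_is_unique_maximizer (τ : ℝ) (hτ : 0 < τ) (n : ℕ) (hn : 1 ≤ n)
    (x : Fin n → ℝ) (hx : ∃ j, x j ≠ 0) :
    IsMaxOn (fun μ : ℝ => -(n : ℝ) * Real.log μ
        - (1 / (2 * τ ^ 2)) * ∑ j, (x j / μ - 1) ^ 2) (Set.Ioi 0)
      ((Real.sqrt (((1 : ℝ) / n * ∑ j, x j) ^ 2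
          + 4 * τ ^ 2 * ((1 : ℝ) / n * ∑ j, (x j) ^ 2))
        - (1 : ℝ) / n * ∑ j, x j) / (2 * τ ^ 2)) ∧
    ∀ μ : ℝ, 0 < μ →
      μ ≠ (Real.sqrt (((1 : ℝ) / n * ∑ j, x j) ^ 2
          + 4 * τ ^ 2 * ((1 : ℝ) / n * ∑ j, (x j) ^ 2))
        - (1 : ℝ) / n * ∑ j, x j) / (2 * τ ^ 2) →
      (fun μ : ℝ => -(n : ℝ) * Real.log μ
          - (1 / (2 * τ ^ 2)) * ∑ j, (x j / μ - 1) ^ 2) μ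
        < (fun μ : ℝ => -(n : ℝ) * Real.log μ
            - (1 / (2 * τ ^ 2)) * ∑ j, (x j / μ - 1) ^ 2)
          ((Real.sqrt (((1 : ℝ) / n * ∑ j, x j) ^ 2
              + 4 * τ ^ 2 * ((1 : ℝ) / n * ∑ j, (x j) ^ 2))
            - (1 : ℝ) / n * ∑ j, x j) / (2 * τ ^ 2)) :=
  cmle_is_unique_maximizer_general τ hτ n x hx
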